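/- Let M be a reversible Mealy automaton with exactly two states. If M^n splits up totally for some n ≥ 1, then M^m splits up totally for every m ≥ n. -/

import Mathlib

/-- Extended production function of a Mealy automaton: `mealyMap δ ρ x` is the
action of the state `x` on finite words over the alphabet. -/
def mealyMap {A S : Type*} (δ : S → A → A) (ρ : A → S → S) : A → List S → List S
  | _, [] => []
  | x, i :: s => ρ x i :: mealyMap δ ρ (δ i x) s

/-- The semigroup generated by a Mealy automaton: the subsemigroup of maps
`Σ* → Σ*` (under composition) generated by the production functions. -/
def mealySemigroup {A S : Type*} (δ : S → A → A) (ρ : A → S → S) :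
    Subsemigroup (Function.End (List S)) :=
  Subsemigroup.closure (Set.range fun x => (mealyMap δ ρ x : Function.End (List S)))

/-- The group generated by an invertible Mealy automaton: the subgroup of
permutations of `Σ*` generated by the production functions. -/
def mealyGroup {A S : Type*} (δ : S → A → A) (ρ : A → S → S) :
    Subgroup (Equiv.Perm (List S)) :=
  Subgroup.closure {f : Equiv.Perm (List S) | ∃ x : A, ⇑f = mealyMap δ ρ x}

/-- A cycle in the automaton `(A, Σ, δ)`: pairwise distinct states
`states 0, …, states (n-1)` with transitions `states k —labels k→ states (k+1 mod n)`. -/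
structure MealyCycle {A S : Type*} (δ : S → A → A) where
  n : ℕ
  npos : 0 < n
  states : Fin n → A
  labels : Fin n → S
  inj : Function.Injective states
  step : ∀ k : Fin n, δ (labels k) (states k) = states ⟨(k + 1) % n, Nat.mod_lt _ npos⟩

/-- The cycle has an external exit. -/
def HasExternalExit {A S : Type*} {δ : S → A → A} (C : MealyCycle δ) : Prop :=
  ∃ (k : Fin C.n) (i : S), δ i (C.states k) ∉ Set.range C.states

/-- The cycle has an internal exit. -/
def HasInternalExit {A S : Type*} {δ : S → A → A} (C : MealyCycle δ) : Prop :=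
  ∃ (k : Fin C.n) (i : S), δ i (C.states k) ∈ Set.range C.states ∧
    δ i (C.states k) ≠ δ (C.labels k) (C.states k)

/-- `v` is reachable from `u` in the automaton `(A, Σ, δ)`. -/
def Reachable {A S : Type*} (δ : S → A → A) (u v : A) : Prop :=
  ∃ s : List S, s.foldl (fun a i => δ i a) u = v

/-- Action of a word `s ∈ Σ*` on states of powers of the automaton (words over `A`),
via the production functions of the dual automaton: `dualAct δ ρ s = δ_s`. -/
def dualAct {A S : Type*} (δ : S → A → A) (ρ : A → S → S) (s : List S) (u : List A) : List A :=
  s.foldl (fun w i => mealyMap ρ δ i w) u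

/-- Two states of a power of a reversible Mealy automaton lie in the same
connected component iff some `δ_s` maps one to the other. -/
def sameComp {A S : Type*} (δ : S → A → A) (ρ : A → S → S) (u w : List A) : Prop :=
  ∃ s : List S, dualAct δ ρ s u = w

/-- The `n`-th power of the Mealy automaton splits up totally: every connected component
of `M^n` has the same size as each of the components of `M^(n+1)` built from it. -/
def SplitsAt {A S : Type*} (δ : S → A → A) (ρ : A → S → S) (n : ℕ) : Prop :=
  ∀ u : List A, u.length = n → ∀ x : A,
    Set.ncard {w | sameComp δ ρ (u ++ [x]) w} = Set.ncard {w | sameComp δ ρ u w}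

/-!
Deleting the last letter maps the component of `u·c` in `M^(n+1)` onto the component of `u` in
`M^n`, so `M^n` splits up totally iff no component of `M^(n+1)` contains two states `u·c` and
`u·d` with `c ≠ d`; for the converse one needs that being in the same component is symmetric,
which holds because each `δ_s` permutes the finitely many words of a given length. On a word
`u·v`, `δ_s` acts on the suffix `v` as `δ_t` for some word `t`. Hence if `u·c` and `u·d` lie in
one component with `|u| = m ≥ n`, deleting the first `m - n` letters gives two such states of
`M^(n+1)`.
-/

section PeriodicPts

variable {α : Type*} {f : α → α} {s : Set α}

theorem Set.InjOn.exists_iterate_succ_eq_of_mapsTo (hf : Set.InjOn f s) (hs : s.Finite)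
    (hmaps : Set.MapsTo f s s) {a : α} (ha : a ∈ s) : ∃ k, f^[k + 1] a = a := by
  have : Finite s := hs
  obtain ⟨p, hp, hper⟩ := (hmaps.restrict_inj.mpr hf).mem_periodicPts ⟨a, ha⟩
  obtain ⟨k, rfl⟩ := Nat.exists_eq_add_of_lt hp
  refine ⟨k, ?_⟩
  simpa [Set.MapsTo.iterate_restrict] using congrArg Subtype.val hper.eq

end PeriodicPts

section Dual

variable {A S : Type*} {δ : S → A → A} {ρ : A → S → S}

theorem dualAct_cons (i : S) (s : List S) (u : List A) :
    dualAct δ ρ (i :: s) u = dualAct δ ρ s (mealyMap ρ δ i u) := rfl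

theorem dualAct_append (s t : List S) (u : List A) :
    dualAct δ ρ (s ++ t) u = dualAct δ ρ t (dualAct δ ρ s u) :=
  List.foldl_append ..

theorem dualAct_flatten_replicate (k : ℕ) (s : List S) :
    dualAct δ ρ (List.replicate k s).flatten = (dualAct δ ρ s)^[k] := by
  induction k with
  | zero => rfl
  | succ k ih =>
    funext u
    rw [Function.iterate_succ_apply', ← ih, List.replicate_succ', List.flatten_append,
      dualAct_append, List.flatten_singleton]

theorem mealyMap_length (x : A) (s : List S) : (mealyMap δ ρ x s).length = s.length := by
  induction s generalizing x with
  | nil => rfl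
  | cons i s ih => simp [mealyMap, ih]

theorem dualAct_length (s : List S) (u : List A) : (dualAct δ ρ s u).length = u.length := by
  induction s generalizing u with
  | nil => rfl
  | cons i s ih => rw [dualAct_cons, ih, mealyMap_length]

theorem mealyMap_injective (hinj : ∀ i, Function.Injective (δ i)) (i : S) :
    Function.Injective (mealyMap ρ δ i) := by
  intro u v huv
  induction u generalizing v i with
  | nil => cases v <;> simp_all [mealyMap]
  | cons a u ih =>
    cases v with
    | nil => simp [mealyMap] at huv
    | cons b v =>
      simp only [mealyMap, List.cons.injEq] at huv
      obtain rfl := hinj i huv.1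
      rw [ih _ huv.2]

theorem dualAct_injective (hinj : ∀ i, Function.Injective (δ i)) (s : List S) :
    Function.Injective (dualAct δ ρ s) := by
  induction s with
  | nil => exact Function.injective_id
  | cons i s ih => exact ih.comp (mealyMap_injective hinj i)

theorem exists_mealyMap_append (i : S) (u v : List A) :
    ∃ j, mealyMap ρ δ i (u ++ v) = mealyMap ρ δ i u ++ mealyMap ρ δ j v := by
  induction u generalizing i with
  | nil => exact ⟨i, rfl⟩
  | cons a u ih =>
    obtain ⟨j, hj⟩ := ih (ρ a i)
    exact ⟨j, by simp [mealyMap, hj]⟩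

theorem exists_dualAct_append (s : List S) (u v : List A) :
    ∃ t, dualAct δ ρ s (u ++ v) = dualAct δ ρ s u ++ dualAct δ ρ t v := by
  induction s generalizing u v with
  | nil => exact ⟨[], rfl⟩
  | cons i s ih =>
    obtain ⟨j, hj⟩ := exists_mealyMap_append (δ := δ) i u v
    obtain ⟨t, ht⟩ := ih (mealyMap ρ δ i u) (mealyMap ρ δ j v)
    exact ⟨j :: t, by rw [dualAct_cons, hj, ht, dualAct_cons, dualAct_cons]⟩

theorem exists_dualAct_concat (s : List S) (u : List A) (c : A) :
    ∃ d, dualAct δ ρ s (u ++ [c]) = dualAct δ ρ s u ++ [d] := by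
  obtain ⟨t, ht⟩ := exists_dualAct_append s u [c]
  obtain ⟨d, hd⟩ := List.length_eq_one_iff.mp (dualAct_length (δ := δ) (ρ := ρ) t [c])
  exact ⟨d, hd ▸ ht⟩

theorem sameComp_refl (u : List A) : sameComp δ ρ u u := ⟨[], rfl⟩

theorem sameComp_trans {u v w : List A} :
    sameComp δ ρ u v → sameComp δ ρ v w → sameComp δ ρ u w
  | ⟨s, hs⟩, ⟨t, ht⟩ => ⟨s ++ t, by rw [dualAct_append, hs, ht]⟩

theorem sameComp_symm [Finite A] (hinj : ∀ i, Function.Injective (δ i)) {u v : List A} :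
    sameComp δ ρ u v → sameComp δ ρ v u := by
  rintro ⟨s, rfl⟩
  obtain ⟨k, hk⟩ := (dualAct_injective hinj s).injOn.exists_iterate_succ_eq_of_mapsTo
    (List.finite_length_eq A u.length) (fun w hw => (dualAct_length s w).trans hw) rfl
  exact ⟨(List.replicate k s).flatten, by
    rwa [dualAct_flatten_replicate, ← Function.iterate_succ_apply]⟩

theorem finite_setOf_sameComp [Finite A] (u : List A) : {w | sameComp δ ρ u w}.Finite :=
  (List.finite_length_eq A u.length).subset fun _ ⟨s, hs⟩ => hs ▸ dualAct_length s u

theorem sameComp_of_append {u v u' v' : List A} (h : sameComp δ ρ (u ++ v) (u' ++ v'))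
    (hlen : u.length = u'.length) : sameComp δ ρ v v' := by
  obtain ⟨s, hs⟩ := h
  obtain ⟨t, ht⟩ := exists_dualAct_append s u v
  rw [ht] at hs
  exact ⟨t, (List.append_inj hs (by rw [dualAct_length, hlen])).2⟩

theorem image_dropLast_setOf_sameComp_concat (u : List A) (c : A) :
    List.dropLast '' {w | sameComp δ ρ (u ++ [c]) w} = {w | sameComp δ ρ u w} := by
  ext w
  constructor
  · rintro ⟨_, ⟨s, rfl⟩, rfl⟩
    obtain ⟨d, hd⟩ := exists_dualAct_concat s u c
    exact ⟨s, by rw [hd, List.dropLast_concat]⟩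
  · rintro ⟨s, rfl⟩
    obtain ⟨d, hd⟩ := exists_dualAct_concat s u c
    exact ⟨_, ⟨s, hd⟩, List.dropLast_concat ..⟩

theorem splitsAt_iff_injOn_dropLast [Finite A] (n : ℕ) :
    SplitsAt δ ρ n ↔ ∀ u : List A, u.length = n → ∀ c,
      Set.InjOn List.dropLast {w | sameComp δ ρ (u ++ [c]) w} :=
  forall₂_congr fun u _ => forall_congr' fun c => by
    rw [← image_dropLast_setOf_sameComp_concat u c, eq_comm,
      Set.ncard_image_iff (finite_setOf_sameComp _)]

theorem splitsAt_iff [Finite A] (hinj : ∀ i, Function.Injective (δ i)) (n : ℕ) :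
    SplitsAt δ ρ n ↔
      ∀ u : List A, u.length = n → ∀ c d, sameComp δ ρ (u ++ [c]) (u ++ [d]) → c = d := by
  rw [splitsAt_iff_injOn_dropLast]
  constructor
  · intro hInj u hu c d hcd
    simpa using hInj u hu c (sameComp_refl _) hcd (by simp)
  · rintro hsplit u hu c _ ⟨s₁, rfl⟩ _ ⟨s₂, rfl⟩ hEq
    obtain ⟨d₁, hd₁⟩ := exists_dualAct_concat s₁ u c
    obtain ⟨d₂, hd₂⟩ := exists_dualAct_concat s₂ u c
    rw [hd₁, hd₂, List.dropLast_concat, List.dropLast_concat] at hEq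
    have hcomp : sameComp δ ρ (dualAct δ ρ s₁ u ++ [d₁]) (dualAct δ ρ s₁ u ++ [d₂]) :=
      sameComp_trans (sameComp_symm hinj ⟨s₁, hd₁⟩) ⟨s₂, by rw [hd₂, hEq]⟩
    rw [hd₁, hd₂, hEq, hsplit _ ((dualAct_length s₁ u).trans hu) d₁ d₂ hcomp]

theorem SplitsAt.mono [Finite A] (hinj : ∀ i, Function.Injective (δ i)) {n m : ℕ}
    (h : SplitsAt δ ρ n) (hnm : n ≤ m) : SplitsAt δ ρ m := by
  rw [splitsAt_iff hinj] at h ⊢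
  intro u hu c d hcd
  rw [← List.take_append_drop (m - n) u, List.append_assoc, List.append_assoc] at hcd
  exact h _ (by rw [List.length_drop, hu]; omega) c d (sameComp_of_append hcd rfl)

end Dual

theorem two_state_splits_forever_general
    {A S : Type*} [Fintype A]
    (δ : S → A → A) (ρ : A → S → S)
    (hrev : ∀ i : S, Function.Bijective (δ i))
    (n : ℕ) (h : SplitsAt δ ρ n) :
    ∀ m : ℕ, n ≤ m → SplitsAt δ ρ m :=
  fun _ hnm => h.mono (fun i => (hrev i).injective) hnm

/-- Lemma 10 of [Kli13]: for a reversible Mealy automaton with exactly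
two states, if `M^n` splits up totally then `M^m` splits up totally for every `m ≥ n`. -/
theorem two_state_splits_forever
    {A S : Type*} [Fintype A] [Fintype S]
    (δ : S → A → A) (ρ : A → S → S)
    (hrev : ∀ i : S, Function.Bijective (δ i))
    (x y : A) (hxy : x ≠ y) (hA : ∀ z : A, z = x ∨ z = y)
    (n : ℕ) (hn : 1 ≤ n) (h : SplitsAt δ ρ n) :
    ∀ m : ℕ, n ≤ m → SplitsAt δ ρ m :=
  two_state_splits_forever_general δ ρ hrev n h
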